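/- Let E be a directed graph and A = KE its path algebra over a field K. Then A is semiprime if and only if for every path μ in E there exists a path λ with s(λ) = r(μ) and r(λ) = s(μ); that is, every connected pair of vertices by a path admits a returning path. -/

import Mathlib

/-!
If a path `p` has no returning path, then `p r p = 0` for every path `r`, hence `p b p = 0` for
every `b` by linearity. Conversely, let `a ≠ 0`, let `p` be a longest path in the support of `a`
and `q` a path returning from `r(p)` to `s(p)`. A concatenation `r₁ q r₂` of paths no longer
than `p` equals `p q p` only when `r₁ = r₂ = p`, so the coefficient of `p q p` in `a q a` is
`a_p² ≠ 0`.
-/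

/-- A directed graph: vertices, edges, source and range maps. -/
structure DGraph : Type 1 where
  V : Type
  Edge : Type
  s : Edge → V
  r : Edge → V

namespace DGraph

/-- A list of edges is composable if consecutive edges match up. -/
def IsComposable (G : DGraph) (l : List G.Edge) : Prop :=
  l.Chain' (fun e f => G.r e = G.s f)

/-- A path in `G`: either a trivial path at a vertex, or a nonempty composable list of edges. -/
def GPath (G : DGraph) : Type :=
  G.V ⊕ {l : List G.Edge // l ≠ [] ∧ G.IsComposable l}

namespace GPath

variable {G : DGraph}

/-- The source of a path. -/
def src : GPath G → G.V
  | Sum.inl v => v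
  | Sum.inr l => G.s (l.1.head l.2.1)

/-- The range of a path. -/
def rng : GPath G → G.V
  | Sum.inl v => v
  | Sum.inr l => G.r (l.1.getLast l.2.1)

/-- The length of a path. -/
def length : GPath G → ℕ
  | Sum.inl _ => 0
  | Sum.inr l => l.1.length

/-- The trivial path at a vertex. -/
def ofVertex (v : G.V) : GPath G := Sum.inl v

/-- The length-one path given by an edge. -/
def ofEdge (e : G.Edge) : GPath G :=
  Sum.inr ⟨[e], by refine ⟨by simp, ?_⟩; exact List.isChain_singleton e⟩

/-- Concatenation of composable paths. -/
def comp : (p q : GPath G) → p.rng = q.src → GPath G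
  | Sum.inl _, q, _ => q
  | Sum.inr l, Sum.inl _, _ => Sum.inr l
  | Sum.inr l, Sum.inr m, h => Sum.inr ⟨l.1 ++ m.1, by
      refine ⟨by simp [l.2.1], l.2.2.append m.2.2 ?_⟩
      intro x hx y hy
      rw [List.getLast?_eq_some_getLast l.2.1] at hx
      rw [List.head?_eq_head m.2.1] at hy
      cases hx
      cases hy
      exact h⟩

end GPath

end DGraph

open DGraph

/-- A realization of the path algebra of the graph `G` over the field `K`:
a `K`-algebra with a basis indexed by the paths of `G`, multiplying by concatenation. -/
structure PathAlgebraOn (K : Type) [Field K] (G : DGraph) (A : Type)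
    [NonUnitalRing A] [Module K A] where
  basis : Module.Basis (GPath G) K A
  mul_comp : ∀ (p q : GPath G) (h : p.rng = q.src),
      basis p * basis q = basis (p.comp q h)
  mul_ncomp : ∀ p q : GPath G, p.rng ≠ q.src → basis p * basis q = 0

namespace DGraph.GPath

variable {G : DGraph}

def edges : GPath G → List G.Edge
  | Sum.inl _ => []
  | Sum.inr l => l.1

lemma length_edges (p : GPath G) : p.edges.length = p.length := by
  cases p <;> rfl

lemma edges_comp (p q : GPath G) (h : p.rng = q.src) :
    (p.comp q h).edges = p.edges ++ q.edges := by
  rcases p with v | l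
  · rfl
  · rcases q with w | m <;> simp [comp, edges]

lemma src_comp (p q : GPath G) (h : p.rng = q.src) : (p.comp q h).src = p.src := by
  rcases p with v | l
  · exact h.symm
  · rcases q with w | m
    · rfl
    · exact congrArg G.s (List.head_append_left l.2.1)

lemma rng_comp (p q : GPath G) (h : p.rng = q.src) : (p.comp q h).rng = q.rng := by
  rcases p with v | l
  · rfl
  · rcases q with w | m
    · exact h
    · exact congrArg G.r (List.getLast_append_right m.2.1)

lemma length_comp (p q : GPath G) (h : p.rng = q.src) :
    (p.comp q h).length = p.length + q.length := by
  simp only [← length_edges, edges_comp, List.length_append]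

lemma ext_of_src_edges {p p' : GPath G} (hs : p.src = p'.src) (he : p.edges = p'.edges) :
    p = p' := by
  rcases p with v | l <;> rcases p' with v' | l'
  · exact congrArg Sum.inl hs
  · exact absurd he.symm l'.2.1
  · exact absurd he l.2.1
  · exact congrArg Sum.inr (Subtype.ext he)

lemma comp_inj {p q p' q' : GPath G} (h : p.rng = q.src) (h' : p'.rng = q'.src)
    (heq : p.comp q h = p'.comp q' h') (hl : p.length = p'.length) : p = p' ∧ q = q' := by
  have hedges : p.edges ++ q.edges = p'.edges ++ q'.edges := by
    rw [← edges_comp p q h, ← edges_comp p' q' h', heq]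
  rw [← length_edges, ← length_edges] at hl
  obtain ⟨hpe, hqe⟩ := List.append_inj hedges hl
  obtain rfl : p = p' :=
    ext_of_src_edges (by rw [← src_comp p q h, ← src_comp p' q' h', heq]) hpe
  exact ⟨rfl, ext_of_src_edges (h.symm.trans h') hqe⟩

lemma eq_of_comp_comp_eq {p q r₁ r₂ : GPath G} (h₁ : p.rng = q.src)
    (h₂ : (p.comp q h₁).rng = p.src) (h₁' : r₁.rng = q.src) (h₂' : (r₁.comp q h₁').rng = r₂.src)
    (heq : (r₁.comp q h₁').comp r₂ h₂' = (p.comp q h₁).comp p h₂)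
    (hr₁ : r₁.length ≤ p.length) (hr₂ : r₂.length ≤ p.length) : r₁ = p ∧ r₂ = p := by
  have hlen := congrArg length heq
  simp only [length_comp] at hlen
  obtain ⟨hr₁q, hr₂⟩ := comp_inj h₂' h₂ heq (by simp only [length_comp]; omega)
  exact ⟨(comp_inj h₁' h₁ hr₁q (by omega)).1, hr₂⟩

end DGraph.GPath

namespace PathAlgebraOn

variable {K : Type} [Field K] {G : DGraph} {A : Type} [NonUnitalRing A] [Module K A]
  (PA : PathAlgebraOn K G A)

lemma basis_mul_basis_mul_basis_eq_zero {p q r : GPath G}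
    (h : ¬(p.rng = q.src ∧ q.rng = r.src)) : PA.basis p * PA.basis q * PA.basis r = 0 := by
  by_cases hpq : p.rng = q.src
  · rw [PA.mul_comp p q hpq]
    exact PA.mul_ncomp _ _ (by rw [GPath.rng_comp]; exact fun hqr => h ⟨hpq, hqr⟩)
  · rw [PA.mul_ncomp p q hpq, zero_mul]

lemma exists_comp_comp_eq_of_repr_ne_zero {r₁ q r₂ t : GPath G}
    (h : PA.basis.repr (PA.basis r₁ * PA.basis q * PA.basis r₂) t ≠ 0) :
    ∃ (h₁ : r₁.rng = q.src) (h₂ : (r₁.comp q h₁).rng = r₂.src),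
      (r₁.comp q h₁).comp r₂ h₂ = t := by
  by_cases h₁ : r₁.rng = q.src
  · by_cases h₂ : (r₁.comp q h₁).rng = r₂.src
    · rw [PA.mul_comp r₁ q h₁, PA.mul_comp _ r₂ h₂, PA.basis.repr_self,
        Finsupp.single_apply_ne_zero] at h
      exact ⟨h₁, h₂, h.1.symm⟩
    · rw [PA.mul_comp r₁ q h₁, PA.mul_ncomp _ r₂ h₂] at h
      simp at h
  · rw [PA.mul_ncomp r₁ q h₁, zero_mul] at h
    simp at h

variable [SMulCommClass K A A] [IsScalarTower K A A]

lemma basis_mul_mul_basis_eq_zero {p : GPath G}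
    (hp : ∀ q : GPath G, q.src = p.rng → q.rng ≠ p.src) (b : A) :
    PA.basis p * b * PA.basis p = 0 := by
  have hzero : LinearMap.mulRight K (PA.basis p) ∘ₗ LinearMap.mulLeft K (PA.basis p) = 0 :=
    PA.basis.ext fun q =>
      PA.basis_mul_basis_mul_basis_eq_zero fun ⟨h₁, h₂⟩ => hp q h₁.symm h₂
  exact LinearMap.congr_fun hzero b

lemma repr_mul_basis_mul_apply (a : A) {p q : GPath G} (h₁ : p.rng = q.src)
    (h₂ : (p.comp q h₁).rng = p.src) (hp : p ∈ (PA.basis.repr a).support)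
    (hmax : ∀ r ∈ (PA.basis.repr a).support, r.length ≤ p.length) :
    PA.basis.repr (a * PA.basis q * a) ((p.comp q h₁).comp p h₂) = PA.basis.repr a p ^ 2 := by
  set t := (p.comp q h₁).comp p h₂
  let B : A →ₗ[K] A →ₗ[K] K :=
    (LinearMap.mul K A ∘ₗ LinearMap.mulRight K (PA.basis q)).compr₂
      (Finsupp.lapply t ∘ₗ PA.basis.repr.toLinearMap)
  have hB : ∀ x y, B x y = PA.basis.repr (x * PA.basis q * y) t := fun _ _ => rfl
  have hoff : ∀ r₁ ∈ (PA.basis.repr a).support, ∀ r₂ ∈ (PA.basis.repr a).support,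
      ¬(r₁ = p ∧ r₂ = p) → B (PA.basis r₁) (PA.basis r₂) = 0 := by
    intro r₁ hr₁ r₂ hr₂ hne
    by_contra hB0
    obtain ⟨h₁', h₂', heq⟩ := PA.exists_comp_comp_eq_of_repr_ne_zero hB0
    exact hne (GPath.eq_of_comp_comp_eq h₁ h₂ h₁' h₂' heq (hmax r₁ hr₁) (hmax r₂ hr₂))
  have hdiag : B (PA.basis p) (PA.basis p) = 1 := by
    rw [hB, PA.mul_comp p q h₁, PA.mul_comp _ p h₂, PA.basis.repr_self, Finsupp.single_eq_same]
  rw [← hB, ← LinearMap.sum_repr_mul_repr_mul PA.basis PA.basis, Finsupp.sum,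
    Finset.sum_eq_single_of_mem p hp, Finsupp.sum, Finset.sum_eq_single_of_mem p hp, hdiag,
    smul_eq_mul, smul_eq_mul, mul_one, sq]
  · intro r₂ hr₂ hne
    simp only [hoff p hp r₂ hr₂ (fun h => hne h.2), smul_zero]
  · intro r₁ hr₁ hne
    exact Finset.sum_eq_zero fun r₂ hr₂ => by
      simp only [hoff r₁ hr₁ r₂ hr₂ (fun h => hne h.1), smul_zero]

end PathAlgebraOn

/-- `KE` is semiprime iff every path admits a returning path. -/
theorem stmt14 (K : Type) [Field K] (G : DGraph)
    (A : Type) [NonUnitalRing A] [Module K A] [SMulCommClass K A A] [IsScalarTower K A A]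
    (PA : PathAlgebraOn K G A) :
    (∀ a : A, (∀ b : A, a * b * a = 0) → a = 0) ↔
    (∀ p : GPath G, ∃ q : GPath G, q.src = p.rng ∧ q.rng = p.src) := by
  constructor
  · intro hsemiprime p
    by_contra! hno
    exact PA.basis.ne_zero p (hsemiprime _ (PA.basis_mul_mul_basis_eq_zero hno))
  · intro hreturn a ha
    by_contra hne
    obtain ⟨p, hp, hmax⟩ := (PA.basis.repr a).support.exists_max_image GPath.length
      (Finsupp.support_nonempty_iff.mpr (by simpa using hne))
    obtain ⟨q, hq₁, hq₂⟩ := hreturn p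
    have hcoeff := PA.repr_mul_basis_mul_apply a hq₁.symm (by rw [GPath.rng_comp, hq₂]) hp hmax
    rw [ha, map_zero, Finsupp.coe_zero, Pi.zero_apply, eq_comm, sq_eq_zero_iff] at hcoeff
    exact Finsupp.mem_support_iff.mp hp hcoeff
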